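/- arXiv:2305.09792 — 3 statements merged into one kernel-verified Lean document; each statement's English description precedes it below -/
import Mathlib

section
/- Let ρ : ℝ → ℝ be a positive, continuously differentiable probability density with score p = ρ'/ρ, and let T : ℝ → ℝ be a C² bijection with T'(x) > 0 for all x. Then the pushforward density ρ_ν(y) = ρ(T⁻¹(y)) / T'(T⁻¹(y)) is positive and differentiable, and for every y ∈ ℝ the derivative of log ρ_ν at y equals G(p,T)(y); that is, the score operator G correctly returns the score of the pushforward density. -/
open MeasureTheory

/-- The one-dimensional score operator: `G(s,U)(y) = s(U⁻¹(y))/U'(U⁻¹(y)) − U''(U⁻¹(y))/(U'(U⁻¹(y)))²`. -/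
noncomputable def scoreOp (s U : ℝ → ℝ) (y : ℝ) : ℝ :=
  s (Function.invFun U y) / deriv U (Function.invFun U y)
    - deriv (deriv U) (Function.invFun U y) / (deriv U (Function.invFun U y)) ^ 2

/-- The score operator returns the score of the pushforward density. -/
theorem score_operator_correct
    (ρ : ℝ → ℝ) (hρpos : ∀ x, 0 < ρ x) (hρ : ContDiff ℝ 1 ρ)
    (hρint : ∫ x, ρ x = 1)
    (p : ℝ → ℝ) (hp : p = fun x => deriv ρ x / ρ x)
    (T : ℝ → ℝ) (hT : ContDiff ℝ 2 T) (hTbij : Function.Bijective T)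
    (hT' : ∀ x, 0 < deriv T x)
    (ρν : ℝ → ℝ)
    (hρν : ρν = fun y => ρ (Function.invFun T y) / deriv T (Function.invFun T y)) :
    (∀ y, 0 < ρν y) ∧
    (∀ y, DifferentiableAt ℝ (fun z => Real.log (ρν z)) y ∧
      deriv (fun z => Real.log (ρν z)) y = scoreOp p T y) := by
  have hTdiff : Differentiable ℝ T := hT.differentiable (by norm_num)
  have hT2 : ContDiff ℝ 1 (deriv T) := by
    have := (contDiff_succ_iff_deriv.mp (by exact_mod_cast hT : ContDiff ℝ ((1:ℕ)+1) T)).2.2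
    exact_mod_cast this
  have hT'diff : Differentiable ℝ (deriv T) := hT2.differentiable (by norm_num)
  set g : ℝ → ℝ := Function.invFun T with hg
  have hgi : Function.RightInverse g T := Function.rightInverse_invFun hTbij.2
  have hmono : StrictMono T := by
    apply strictMono_of_deriv_pos hT'
  set e : ℝ ≃o ℝ := hmono.orderIsoOfSurjective T hTbij.2 with he
  have hge : ∀ y, g y = e.symm y := by
    intro y
    apply hTbij.1
    rw [hgi y]
    exact (e.apply_symm_apply y).symm
  have hgcont : Continuous g := by
    have : Continuous fun y => e.symm y := (OrderIso.continuous e.symm)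
    exact this.congr fun y => (hge y).symm
  have hρνpos : ∀ y, 0 < ρν y := by
    intro y
    rw [hρν]
    exact div_pos (hρpos _) (hT' _)
  refine ⟨hρνpos, fun y => ?_⟩
  set x := g y with hx
  have hb : deriv T x ≠ 0 := (hT' x).ne'
  have hg' : HasDerivAt g (deriv T x)⁻¹ y := by
    apply HasDerivAt.of_local_left_inverse (hgcont.continuousAt) (hTdiff x).hasDerivAt hb
    exact Filter.Eventually.of_forall fun z => hgi z
  have hρ' : HasDerivAt (fun z => ρ (g z)) (deriv ρ x * (deriv T x)⁻¹) y :=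
    ((hρ.differentiable (by norm_num) x).hasDerivAt).comp y hg'
  have hT'' : HasDerivAt (fun z => deriv T (g z)) (deriv (deriv T) x * (deriv T x)⁻¹) y :=
    by have := ((hT'diff x).hasDerivAt).comp (x := y) (h₂ := deriv T) hg'; exact this
  have hρνd : HasDerivAt ρν
      ((deriv ρ x * (deriv T x)⁻¹ * deriv T x - ρ x * (deriv (deriv T) x * (deriv T x)⁻¹))
        / (deriv T x) ^ 2) y := by
    rw [hρν]
    exact hρ'.div hT'' hb
  have hlog : HasDerivAt (fun z => Real.log (ρν z))
      ((ρν y)⁻¹ * ((deriv ρ x * (deriv T x)⁻¹ * deriv T x - ρ x * (deriv (deriv T) x * (deriv T x)⁻¹))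
        / (deriv T x) ^ 2)) y := by
    have := (Real.hasDerivAt_log (hρνpos y).ne').comp y hρνd
    exact this
  refine ⟨hlog.differentiableAt, ?_⟩
  rw [hlog.deriv, scoreOp, hp, hρν]
  simp only [← hg, ← hx]
  have ha : ρ x ≠ 0 := (hρpos x).ne'
  field_simp
end

section
/- Pointwise linearization of the score operator at the identity: let q : ℝ → ℝ be continuously differentiable and let v : ℝ → ℝ be C² with v, v', and v'' bounded on ℝ. Then for all ε with |ε|·sup|v'| < 1 the map Id + εv is a C² bijection of ℝ with positive derivative, and for every fixed y ∈ ℝ the function ε ↦ G(q, Id + εv)(y) is differentiable at ε = 0 with derivative −(q'(y)·v(y) + q(y)·v'(y) + v''(y)). Equivalently, the Fréchet derivative of the score operator in its second argument at (q, Id) is −L(q), where L(q)v = q'v + qv' + v''. -/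
open Filter Topology Function

lemma hasDerivAt_pert (v : ℝ → ℝ) (hv : Differentiable ℝ v) (ε x : ℝ) :
    HasDerivAt (fun x => x + ε * v x) (1 + ε * deriv v x) x :=
  (hasDerivAt_id x).add (((hv x).hasDerivAt).const_mul ε)

lemma pert_bij (v : ℝ → ℝ) (hv : Differentiable ℝ v)
    (Mv M' : ℝ) (hMv : ∀ x, |v x| ≤ Mv) (hM' : ∀ x, |deriv v x| ≤ M')
    (ε : ℝ) (hε : |ε| * M' < 1) :
    Function.Bijective (fun x => x + ε * v x) ∧ ∀ x, 0 < 1 + ε * deriv v x := by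
  have hpos : ∀ x, 0 < 1 + ε * deriv v x := by
    intro x
    have h1 : |ε * deriv v x| ≤ |ε| * M' := by
      rw [abs_mul]; exact mul_le_mul_of_nonneg_left (hM' x) (abs_nonneg ε)
    nlinarith [neg_abs_le (ε * deriv v x)]
  refine ⟨⟨?_, ?_⟩, hpos⟩
  · exact (strictMono_of_deriv_pos (fun x => by
      rw [(hasDerivAt_pert v hv ε x).deriv]; exact hpos x)).injective
  · have hc : Continuous (fun x => x + ε * v x) :=
      continuous_id.add (continuous_const.mul hv.continuous)
    have hb : ∀ x, |ε * v x| ≤ |ε| * Mv := by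
      intro x; rw [abs_mul]; exact mul_le_mul_of_nonneg_left (hMv x) (abs_nonneg ε)
    refine hc.surjective ?_ ?_
    · refine tendsto_atTop_mono (fun x => ?_)
        (tendsto_atTop_add_const_right _ (-(|ε| * Mv)) tendsto_id)
      have := neg_abs_le (ε * v x); have := hb x; simp only [id]; linarith
    · refine tendsto_atBot_mono (fun x => ?_)
        (tendsto_atBot_add_const_right _ (|ε| * Mv) tendsto_id)
      have := le_abs_self (ε * v x); have := hb x; simp only [id]; linarith

lemma hasDerivAt_id_mul_of_continuousAt (g : ℝ → ℝ) (hg : ContinuousAt g 0) :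
    HasDerivAt (fun ε => ε * g ε) (g 0) 0 := by
  rw [hasDerivAt_iff_tendsto_slope]
  have h : ∀ ε ∈ ({0}ᶜ : Set ℝ), g ε = slope (fun ε => ε * g ε) 0 ε := by
    intro ε hε
    simp only [Set.mem_compl_iff, Set.mem_singleton_iff] at hε
    rw [slope_def_field]; field_simp
    ring
  exact Tendsto.congr' (eventuallyEq_nhdsWithin_of_eqOn h)
    (hg.tendsto.mono_left nhdsWithin_le_nhds)

/-- Pointwise linearization of the score operator at the identity: for bounded `v, v', v''`,
`Id + εv` is a C² bijection with positive derivative whenever `|ε|·sup|v'| < 1`, and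
`d/dε G(q, Id + εv)(y)|_{ε=0} = −(q'(y)v(y) + q(y)v'(y) + v''(y))`, i.e. the derivative of the
score operator in its second argument at `(q, Id)` is `−L(q)` where `L(q)v = q'v + qv' + v''`. -/
theorem score_operator_linearization
    (q v : ℝ → ℝ) (hq : ContDiff ℝ 1 q) (hv : ContDiff ℝ 2 v)
    (hvb : ∃ M, ∀ x, |v x| ≤ M)
    (hvb' : ∃ M, ∀ x, |deriv v x| ≤ M)
    (hvb'' : ∃ M, ∀ x, |deriv (deriv v) x| ≤ M) :
    (∀ ε : ℝ, |ε| * (⨆ x, |deriv v x|) < 1 →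
      ContDiff ℝ 2 (fun x => x + ε * v x) ∧
      Function.Bijective (fun x => x + ε * v x) ∧
      ∀ x, 0 < deriv (fun x' => x' + ε * v x') x) ∧
    ∀ y : ℝ, HasDerivAt (fun ε : ℝ => scoreOp q (fun x => x + ε * v x) y)
      (-(deriv q y * v y + q y * deriv v y + deriv (deriv v) y)) 0 := by
  obtain ⟨Mv, hMv⟩ := hvb
  obtain ⟨M', hM'⟩ := hvb'
  have hvd : Differentiable ℝ v := hv.differentiable (by norm_num)
  -- v is C², so deriv v is C¹
  have hv2 : ContDiff ℝ (1 + 1) v := by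
    rw [show ((1 : WithTop ℕ∞) + 1) = 2 by norm_num]; exact hv
  have hdv1 : ContDiff ℝ 1 (deriv v) := (contDiff_succ_iff_deriv.mp hv2).2.2
  have hdvd : Differentiable ℝ (deriv v) := hdv1.differentiable (by norm_num)
  have hddvc : Continuous (deriv (deriv v)) :=
    (contDiff_one_iff_deriv.mp hdv1).2
  constructor
  · intro ε hε
    have hS : ∀ x, |deriv v x| ≤ ⨆ x, |deriv v x| := fun x =>
      le_ciSup ⟨M', Set.forall_mem_range.mpr hM'⟩ x
    obtain ⟨hbij, hpos⟩ := pert_bij v hvd Mv _ hMv hS ε hε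
    refine ⟨contDiff_id.add (contDiff_const.mul hv), hbij, fun x => ?_⟩
    rw [(hasDerivAt_pert v hvd ε x).deriv]; exact hpos x
  · intro y
    set δ : ℝ := (1 + max M' 0)⁻¹ with hδdef
    have hM'0 : 0 ≤ max M' 0 := le_max_right _ _
    have hδpos : 0 < δ := by positivity
    have hsmall : ∀ ε : ℝ, |ε| < δ → |ε| * M' < 1 := by
      intro ε hε
      have h1 : |ε| * M' ≤ |ε| * max M' 0 :=
        mul_le_mul_of_nonneg_left (le_max_left _ _) (abs_nonneg ε)
      have h2 : |ε| * (1 + max M' 0) < δ * (1 + max M' 0) := by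
        apply mul_lt_mul_of_pos_right hε; linarith
      rw [hδdef] at h2
      rw [inv_mul_cancel₀ (by linarith)] at h2
      nlinarith [abs_nonneg ε]
    set X : ℝ → ℝ := fun ε => Function.invFun (fun x => x + ε * v x) y with hXdef
    have hinv : ∀ ε : ℝ, |ε| < δ → X ε + ε * v (X ε) = y := by
      intro ε hε
      have hbij := (pert_bij v hvd Mv M' hMv hM' ε (hsmall ε hε)).1
      exact Function.rightInverse_invFun hbij.2 y
    have hX0 : X 0 = y := by
      have h := hinv 0 (by simpa using hδpos)
      simpa using h
    have hXb : ∀ ε : ℝ, |ε| < δ → |X ε - y| ≤ Mv * |ε| := by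
      intro ε hε
      have h := hinv ε hε
      have : X ε - y = -(ε * v (X ε)) := by linarith
      rw [this, abs_neg, abs_mul, mul_comm]
      exact mul_le_mul_of_nonneg_right (hMv _) (abs_nonneg ε)
    have hXcont : Tendsto X (𝓝 0) (𝓝 y) := by
      rw [tendsto_iff_dist_tendsto_zero]
      refine squeeze_zero' (g := fun ε : ℝ => Mv * |ε|)
        (Eventually.of_forall fun ε => dist_nonneg) ?_ ?_
      · filter_upwards [Metric.ball_mem_nhds (0:ℝ) hδpos] with ε hε
        rw [Real.dist_eq]
        exact hXb ε (by simpa [Real.dist_eq] using hε)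
      · have : Tendsto (fun ε : ℝ => Mv * |ε|) (𝓝 0) (𝓝 (Mv * |0|)) :=
          (continuous_const.mul continuous_abs).tendsto 0
        simpa using this
    have hXd : HasDerivAt X (-(v y)) 0 := by
      rw [hasDerivAt_iff_tendsto_slope]
      have hev : (fun ε => -(v (X ε))) =ᶠ[𝓝[≠] (0:ℝ)] slope X 0 := by
        filter_upwards [nhdsWithin_le_nhds (Metric.ball_mem_nhds (0:ℝ) hδpos),
          self_mem_nhdsWithin] with ε hε hε0
        have hεδ : |ε| < δ := by simpa [Real.dist_eq] using hε
        have h := hinv ε hεδ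
        have hε0' : ε ≠ 0 := hε0
        rw [slope_def_field, hX0]
        field_simp
        linarith
      refine Tendsto.congr' hev ?_
      exact ((hvd.continuous.tendsto y).comp
        (hXcont.mono_left nhdsWithin_le_nhds)).neg
    -- derivative pieces
    have hqd : HasDerivAt q (deriv q y) (X 0) := by
      rw [hX0]; exact ((hq.differentiable (by norm_num)) y).hasDerivAt
    have hA1 : HasDerivAt (fun ε => q (X ε)) (deriv q y * -(v y)) 0 :=
      hqd.comp 0 hXd
    have hdvy : HasDerivAt (deriv v) (deriv (deriv v) y) (X 0) := by
      rw [hX0]; exact (hdvd y).hasDerivAt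
    have hA2 : HasDerivAt (fun ε => deriv v (X ε)) (deriv (deriv v) y * -(v y)) 0 :=
      hdvy.comp 0 hXd
    have hden : HasDerivAt (fun ε => 1 + ε * deriv v (X ε)) (deriv v y) 0 := by
      have := ((hasDerivAt_id (0:ℝ)).mul hA2).const_add 1
      simpa [hX0] using this
    have hden0 : (fun ε => 1 + ε * deriv v (X ε)) 0 = 1 := by simp
    have hnum2 : HasDerivAt (fun ε => ε * deriv (deriv v) (X ε)) (deriv (deriv v) y) 0 := by
      have hXca : ContinuousAt X 0 := by rw [ContinuousAt, hX0]; exact hXcont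
      have hc : ContinuousAt (fun ε => deriv (deriv v) (X ε)) 0 :=
        hddvc.continuousAt.comp hXca
      have := hasDerivAt_id_mul_of_continuousAt _ hc
      simpa [hX0] using this
    have hden2 : HasDerivAt (fun ε => (1 + ε * deriv v (X ε)) ^ 2) (2 * deriv v y) 0 := by
      have := hden.fun_pow 2
      simpa using this
    have hF : HasDerivAt (fun ε => q (X ε) / (1 + ε * deriv v (X ε))
        - (ε * deriv (deriv v) (X ε)) / (1 + ε * deriv v (X ε)) ^ 2)
        (-(deriv q y * v y + q y * deriv v y + deriv (deriv v) y)) 0 := by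
      have hA := hA1.fun_div hden (by simp)
      have hB := hnum2.fun_div hden2 (by simp)
      have := hA.fun_sub hB
      refine this.congr_deriv ?_
      simp [hX0]
      ring
    refine hF.congr_of_eventuallyEq ?_
    filter_upwards [Metric.ball_mem_nhds (0:ℝ) hδpos] with ε hε
    have hεδ : |ε| < δ := by simpa [Real.dist_eq] using hε
    have hd1 : deriv (fun x => x + ε * v x) = fun x => 1 + ε * deriv v x :=
      funext fun x => (hasDerivAt_pert v hvd ε x).deriv
    have hd2 : ∀ p, deriv (fun x => 1 + ε * deriv v x) p = ε * deriv (deriv v) p := by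
      intro p
      exact (((hdvd p).hasDerivAt.const_mul ε).const_add 1).deriv
    show scoreOp q (fun x => x + ε * v x) y = _
    rw [scoreOp, hd1, hd2]
end

section
/- A score-matching map is a transport map (corollary in the proof of Theorem 1, one-dimensional): let μ and ν be probability measures on ℝ with positive, continuously differentiable densities ρ_μ and ρ_ν, and scores p = ρ_μ'/ρ_μ and q = ρ_ν'/ρ_ν. Let T : ℝ → ℝ be a C² surjective map with T'(x) > 0 for all x, satisfying p(x) = q(T(x))·T'(x) + T''(x)/T'(x) for all x ∈ ℝ, and suppose the normalization ρ_ν(T(x₀))·T'(x₀) = ρ_μ(x₀) holds at some point x₀. Then ρ_ν(T(x))·T'(x) = ρ_μ(x) for all x ∈ ℝ, and consequently the pushforward of μ under T equals ν: T_♯ μ = ν. -/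
open MeasureTheory

/-- A score-matching map is a transport map (1D): if `T` is C², surjective, has positive
derivative, satisfies the score-matching identity `p = (q ∘ T)·T' + T''/T'` and the
change-of-variables normalization holds at one point, then it holds everywhere and `T_♯ μ = ν`. -/
theorem score_matching_implies_transport
    (ρμ ρν : ℝ → ℝ) (hρμpos : ∀ x, 0 < ρμ x) (hρνpos : ∀ x, 0 < ρν x)
    (hρμ : ContDiff ℝ 1 ρμ) (hρν : ContDiff ℝ 1 ρν)
    (μ ν : Measure ℝ)
    (hμ : μ = volume.withDensity fun x => ENNReal.ofReal (ρμ x))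
    (hν : ν = volume.withDensity fun x => ENNReal.ofReal (ρν x))
    (hμprob : IsProbabilityMeasure μ) (hνprob : IsProbabilityMeasure ν)
    (p q : ℝ → ℝ)
    (hp : p = fun x => deriv ρμ x / ρμ x) (hq : q = fun x => deriv ρν x / ρν x)
    (T : ℝ → ℝ) (hT : ContDiff ℝ 2 T) (hTsurj : Function.Surjective T)
    (hT' : ∀ x, 0 < deriv T x)
    (hmatch : ∀ x, p x = q (T x) * deriv T x + deriv (deriv T) x / deriv T x)
    (x₀ : ℝ) (hnorm : ρν (T x₀) * deriv T x₀ = ρμ x₀) :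
    (∀ x, ρν (T x) * deriv T x = ρμ x) ∧ Measure.map T μ = ν := by
  -- basic differentiability facts
  have hTdiff : Differentiable ℝ T := hT.differentiable (by norm_num)
  have hdTdiff : Differentiable ℝ (deriv T) := by
    have h2 : ContDiff ℝ (1 + 1) T := by
      rw [show ((1 : WithTop ℕ∞) + 1) = 2 by norm_num]; exact hT
    rw [contDiff_succ_iff_deriv] at h2
    exact h2.2.2.differentiable (by norm_num)
  have hρνdiff : Differentiable ℝ ρν := hρν.differentiable (by norm_num)
  have hρμdiff : Differentiable ℝ ρμ := hρμ.differentiable (by norm_num)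
  -- F = (ρν ∘ T) * T'
  set F : ℝ → ℝ := fun x => ρν (T x) * deriv T x with hF
  have hFpos : ∀ x, 0 < F x := fun x => mul_pos (hρνpos _) (hT' x)
  have hFderiv : ∀ x, HasDerivAt F
      (deriv ρν (T x) * deriv T x * deriv T x + ρν (T x) * deriv (deriv T) x) x := by
    intro x
    have h1 : HasDerivAt (fun x => ρν (T x)) (deriv ρν (T x) * deriv T x) x :=
      (hρνdiff (T x)).hasDerivAt.comp x (hTdiff x).hasDerivAt
    exact h1.mul (hdTdiff x).hasDerivAt
  -- the score-matching identity gives F' = p * F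
  have hFd : ∀ x, deriv F x = deriv ρμ x / ρμ x * F x := by
    intro x
    rw [(hFderiv x).deriv]
    have hm := hmatch x
    rw [hp, hq] at hm
    simp only at hm
    have hTx := (hT' x).ne'
    have hρ := (hρνpos (T x)).ne'
    have hρμx := (hρμpos x).ne'
    field_simp [hF]
    field_simp at hm
    nlinarith [hm]
  -- G = F / ρμ is constant
  have hFdiff : Differentiable ℝ F := fun x => (hFderiv x).differentiableAt
  have hGconst : ∀ x, F x / ρμ x = F x₀ / ρμ x₀ := by
    intro x
    have hGdiff : Differentiable ℝ (fun x => F x / ρμ x) :=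
      hFdiff.div hρμdiff (fun x => (hρμpos x).ne')
    have hGd : ∀ x, deriv (fun x => F x / ρμ x) x = 0 := by
      intro x
      have := ((hFderiv x).div (hρμdiff x).hasDerivAt (hρμpos x).ne').deriv
      rw [show (fun x => F x / ρμ x) = F / ρμ from rfl, this, ← (hFderiv x).deriv, hFd x]
      have hρμx := (hρμpos x).ne'
      field_simp
      ring
    exact is_const_of_deriv_eq_zero hGdiff hGd x x₀
  have key : ∀ x, ρν (T x) * deriv T x = ρμ x := by
    intro x
    have := hGconst x
    rw [show F x₀ = ρμ x₀ from hnorm] at this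
    have hρμx := (hρμpos x).ne'
    have hρμ0 := (hρμpos x₀).ne'
    field_simp at this
    simpa [hF] using this
  refine ⟨key, ?_⟩
  -- pushforward
  have hTinj : Function.Injective T := (strictMono_of_deriv_pos hT').injective
  have hTmeas : Measurable T := hT.continuous.measurable
  ext A hA
  rw [Measure.map_apply hTmeas hA, hμ, hν, withDensity_apply _ hA,
    withDensity_apply _ (hTmeas hA)]
  have himg : T '' (T ⁻¹' A) = A := Set.image_preimage_eq A hTsurj
  have := lintegral_image_eq_lintegral_abs_det_fderiv_mul (volume : Measure ℝ)
    (hTmeas hA) (f' := fun x => (1 : ℝ →L[ℝ] ℝ).smulRight (deriv T x))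
    (fun x _ => ((hTdiff x).hasDerivAt.hasFDerivAt).hasFDerivWithinAt)
    (hTinj.injOn) (fun x => ENNReal.ofReal (ρν x))
  rw [himg] at this
  rw [this]
  apply setLIntegral_congr_fun (hTmeas hA)
  intro x _
  dsimp only
  rw [ContinuousLinearMap.smulRight_one_eq_toSpanSingleton, ContinuousLinearMap.det_toSpanSingleton, abs_of_pos (hT' x), ← ENNReal.ofReal_mul (hT' x).le,
    mul_comm (deriv T x), key x]
end
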